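/- arXiv:1307.1334 — 2 statements merged into one kernel-verified Lean document; each statement's English description precedes it below -/
import Mathlib

section
/- Off-diagonal kernel mass estimate: suppose p(t,x₀,y) ≤ C μ(B(x₀,√t))⁻¹ e^{−d(x₀,y)²/(C₁ t)}, ∫_X p(t,x₀,y) dμ(y) ≤ 1, and μ is Q-doubling. Then for all 0 < t ≤ R², (C/R²) ∫₀^t ∫_{B(x₀,3R)\setminus B(x₀,R/2)} p(s,x₀,y)² dμ(y) ds ≤ C' μ(B(x₀,R))⁻¹ e^{−R²/(c t)} for constants C', c depending only on C, C₁, Q and the doubling constant. -/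
/-!
On the annulus `B(x₀,3R) ∖ B(x₀,R/2)` the Gaussian bound gives
`p(s,x₀,y)² ≤ C² μ(B(x₀,√s))⁻² e^{-R²/(2C₁s)}`, so the inner integral is at most
`C² μ(B(x₀,3R)) μ(B(x₀,√s))⁻² e^{-R²/(2C₁s)}`. Doubling twice from radius `√s < R` trades
`μ(B(x₀,3R)) μ(B(x₀,√s))⁻²` for `μ(B(x₀,R))⁻¹` at the cost of a polynomial factor `(R²/s)^Q`,
which half of the Gaussian absorbs: `u^Q e^{-u/(2C₁)} ≲ e^{-u/(4C₁)}` for `u = R²/s ≥ 1`.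
Integrating over `s < t ≤ R²` costs a factor `t ≤ R²`, cancelled by the prefactor `C/R²`.
-/

open MeasureTheory Metric Real Set
open scoped Nat

theorem pow_mul_exp_neg_div_le {u b : ℝ} (hu : 0 ≤ u) (hb : 0 < b) (n : ℕ) :
    u ^ n * exp (-(u / b)) ≤ n ! * b ^ n := by
  have h := (div_le_iff₀ (by positivity)).mp (pow_div_factorial_le_exp _ (div_nonneg hu hb.le) n)
  calc u ^ n * exp (-(u / b)) = (u / b) ^ n * exp (-(u / b)) * b ^ n := by
        rw [div_pow]; field_simp
    _ ≤ exp (u / b) * n ! * exp (-(u / b)) * b ^ n := by gcongr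
    _ = n ! * b ^ n := by
        rw [mul_comm (exp _), mul_assoc (n ! : ℝ), ← exp_add, add_neg_cancel, exp_zero, mul_one]

theorem rpow_mul_exp_neg_div_le {u b : ℝ} (Q : ℝ) (hu : 1 ≤ u) (hb : 0 < b) :
    u ^ Q * exp (-(u / b)) ≤ ⌈Q⌉₊ ! * (2 * b) ^ ⌈Q⌉₊ * exp (-(u / (2 * b))) := by
  have hpow : u ^ Q ≤ u ^ ⌈Q⌉₊ := by
    simpa only [rpow_natCast] using rpow_le_rpow_of_exponent_le hu (Nat.le_ceil Q)
  have hsplit : exp (-(u / b)) = exp (-(u / (2 * b))) * exp (-(u / (2 * b))) := by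
    rw [← exp_add]; congr 1; field_simp; ring
  calc u ^ Q * exp (-(u / b)) ≤ u ^ ⌈Q⌉₊ * exp (-(u / b)) := by gcongr
    _ = u ^ ⌈Q⌉₊ * exp (-(u / (2 * b))) * exp (-(u / (2 * b))) := by rw [hsplit, mul_assoc]
    _ ≤ ⌈Q⌉₊ ! * (2 * b) ^ ⌈Q⌉₊ * exp (-(u / (2 * b))) :=
        mul_le_mul_of_nonneg_right
          (pow_mul_exp_neg_div_le (by linarith) (by positivity) _) (exp_pos _).le

section HeatKernel

variable {X : Type*} [MetricSpace X] [MeasurableSpace X]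

def IsDoublingWith (μ : Measure X) (C_Q Q : ℝ) : Prop :=
  ∀ (x : X) (r s : ℝ), 0 < r → r < s → μ.real (ball x s) ≤ C_Q * (s / r) ^ Q * μ.real (ball x r)

def GaussianUpperBound (μ : Measure X) (x₀ : X) (p : ℝ → X → ℝ) (C C₁ : ℝ) : Prop :=
  ∀ s, 0 < s → ∀ y, p s y ≤ C * (μ.real (ball x₀ (√s)))⁻¹ * exp (-(dist x₀ y) ^ 2 / (C₁ * s))

variable {μ : Measure X} {C_Q Q : ℝ}

theorem IsDoublingWith.measureReal_ball_mul_le (h : IsDoublingWith μ C_Q Q) (x : X)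
    {r R S : ℝ} (hr : 0 < r) (hrR : r < R) (hRS : R ≤ S) :
    μ.real (ball x S) * μ.real (ball x R) ≤
      C_Q ^ 2 * (S / r) ^ Q * (R / r) ^ Q * μ.real (ball x r) ^ 2 := by
  have hS := h x r S hr (hrR.trans_le hRS)
  have hR := h x r R hr hrR
  calc μ.real (ball x S) * μ.real (ball x R)
      ≤ (C_Q * (S / r) ^ Q * μ.real (ball x r)) * (C_Q * (R / r) ^ Q * μ.real (ball x r)) :=
        mul_le_mul hS hR measureReal_nonneg (measureReal_nonneg.trans hS)
    _ = C_Q ^ 2 * (S / r) ^ Q * (R / r) ^ Q * μ.real (ball x r) ^ 2 := by ring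

theorem GaussianUpperBound.le_of_le_dist {x₀ : X} {p : ℝ → X → ℝ} {C C₁ : ℝ}
    (h : GaussianUpperBound μ x₀ p C C₁) (hC : 0 ≤ C) (hC₁ : 0 < C₁) {s r : ℝ} (hs : 0 < s)
    (hr : 0 ≤ r) {y : X} (hy : r ≤ dist x₀ y) :
    p s y ≤ C * (μ.real (ball x₀ (√s)))⁻¹ * exp (-(r ^ 2 / (C₁ * s))) := by
  refine (h s hs y).trans ?_
  gcongr
  rw [neg_div]
  gcongr

theorem norm_setIntegral_sq_annulus_le {x₀ : X} {p : ℝ → X → ℝ} {C C₁ R s : ℝ}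
    (hupper : GaussianUpperBound μ x₀ p C C₁) (hp : ∀ y, 0 ≤ p s y)
    (hdoub : IsDoublingWith μ C_Q Q) (hball : ∀ r, 0 < r → 0 < μ.real (ball x₀ r))
    (hC : 0 ≤ C) (hC₁ : 0 < C₁) (hR : 0 < R) (hs : 0 < s) (hsR : s < R ^ 2) :
    ‖∫ y in ball x₀ (3 * R) \ ball x₀ (R / 2), p s y ^ 2 ∂μ‖ ≤
      C ^ 2 * C_Q ^ 2 * 3 ^ Q / μ.real (ball x₀ R) *
        ((R ^ 2 / s) ^ Q * exp (-(R ^ 2 / s / (2 * C₁)))) := by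
  set V := μ.real (ball x₀ (√s))
  set E := exp (-((R / 2) ^ 2 / (C₁ * s)))
  have hV : 0 < V := hball _ (sqrt_pos.mpr hs)
  have hsqrt : √s < R := by simpa [sqrt_sq hR.le] using sqrt_lt_sqrt hs.le hsR
  have hfin : μ (ball x₀ (3 * R)) ≠ ⊤ :=
    (ENNReal.toReal_pos_iff.mp (hball _ (by positivity))).2.ne
  have hpt : ∀ y ∈ ball x₀ (3 * R) \ ball x₀ (R / 2), ‖p s y ^ 2‖ ≤ (C * V⁻¹ * E) ^ 2 := by
    rintro y ⟨-, hy⟩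
    rw [mem_ball, dist_comm, not_lt] at hy
    rw [Real.norm_of_nonneg (sq_nonneg _)]
    exact pow_le_pow_left₀ (hp y) (hupper.le_of_le_dist hC hC₁ hs (by positivity) hy) 2
  have hdbl := hdoub.measureReal_ball_mul_le x₀ (sqrt_pos.mpr hs) hsqrt (by linarith : R ≤ 3 * R)
  have hratio : (3 * R / √s) ^ Q * (R / √s) ^ Q = 3 ^ Q * (R ^ 2 / s) ^ Q := by
    rw [mul_div_assoc, mul_rpow (by norm_num) (by positivity), mul_assoc,
      ← mul_rpow (by positivity) (by positivity), div_mul_div_comm, ← sq, ← sq, sq_sqrt hs.le]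
  have hvol : μ.real (ball x₀ (3 * R)) / V ^ 2 ≤
      C_Q ^ 2 * 3 ^ Q * (R ^ 2 / s) ^ Q / μ.real (ball x₀ R) := by
    rw [div_le_div_iff₀ (by positivity) (hball R hR)]
    calc _ ≤ _ := hdbl
      _ = C_Q ^ 2 * 3 ^ Q * (R ^ 2 / s) ^ Q * V ^ 2 := by rw [mul_assoc (C_Q ^ 2), hratio]; ring
  have hE : E ^ 2 = exp (-(R ^ 2 / s / (2 * C₁))) := by
    rw [← exp_nat_mul]; congr 1; field_simp; ring
  calc ‖∫ y in ball x₀ (3 * R) \ ball x₀ (R / 2), p s y ^ 2 ∂μ‖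
      ≤ (C * V⁻¹ * E) ^ 2 * μ.real (ball x₀ (3 * R) \ ball x₀ (R / 2)) :=
        norm_setIntegral_le_of_norm_le_const ((measure_mono sdiff_subset).trans_lt hfin.lt_top) hpt
    _ ≤ (C * V⁻¹ * E) ^ 2 * μ.real (ball x₀ (3 * R)) := by gcongr; exact sdiff_subset
    _ = C ^ 2 * E ^ 2 * (μ.real (ball x₀ (3 * R)) / V ^ 2) := by ring
    _ ≤ C ^ 2 * E ^ 2 * (C_Q ^ 2 * 3 ^ Q * (R ^ 2 / s) ^ Q / μ.real (ball x₀ R)) := by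
        gcongr
    _ = C ^ 2 * C_Q ^ 2 * 3 ^ Q / μ.real (ball x₀ R) *
          ((R ^ 2 / s) ^ Q * exp (-(R ^ 2 / s / (2 * C₁)))) := by rw [← hE]; ring

theorem norm_setIntegral_sq_annulus_le_exp {x₀ : X} {p : ℝ → X → ℝ} {C C₁ R s t : ℝ}
    (hupper : GaussianUpperBound μ x₀ p C C₁) (hp : ∀ y, 0 ≤ p s y)
    (hdoub : IsDoublingWith μ C_Q Q) (hball : ∀ r, 0 < r → 0 < μ.real (ball x₀ r))
    (hC : 0 ≤ C) (hC₁ : 0 < C₁) (hR : 0 < R) (hs : 0 < s) (hst : s < t) (htR : t ≤ R ^ 2) :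
    ‖∫ y in ball x₀ (3 * R) \ ball x₀ (R / 2), p s y ^ 2 ∂μ‖ ≤
      C ^ 2 * C_Q ^ 2 * 3 ^ Q * (⌈Q⌉₊ ! * (4 * C₁) ^ ⌈Q⌉₊) / μ.real (ball x₀ R) *
        exp (-R ^ 2 / (4 * C₁ * t)) := by
  have hu : 1 ≤ R ^ 2 / s := (one_le_div hs).mpr (by linarith)
  have hexp : -(R ^ 2 / s / (4 * C₁)) ≤ -R ^ 2 / (4 * C₁ * t) := by
    rw [neg_div, neg_le_neg_iff, div_div]
    exact div_le_div_of_nonneg_left (sq_nonneg R) (by positivity) (by nlinarith)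
  have hscalar := rpow_mul_exp_neg_div_le Q hu (mul_pos two_pos hC₁)
  rw [← mul_assoc, show (2 : ℝ) * 2 = 4 by norm_num] at hscalar
  calc _ ≤ C ^ 2 * C_Q ^ 2 * 3 ^ Q / μ.real (ball x₀ R) *
          ((R ^ 2 / s) ^ Q * exp (-(R ^ 2 / s / (2 * C₁)))) :=
        norm_setIntegral_sq_annulus_le hupper hp hdoub hball hC hC₁ hR hs (by linarith)
    _ ≤ C ^ 2 * C_Q ^ 2 * 3 ^ Q / μ.real (ball x₀ R) *
          (⌈Q⌉₊ ! * (4 * C₁) ^ ⌈Q⌉₊ * exp (-R ^ 2 / (4 * C₁ * t))) :=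
        mul_le_mul_of_nonneg_left (hscalar.trans (by gcongr)) (by positivity)
    _ = _ := by ring

end HeatKernel

theorem stmt_13_general {X : Type*} [MetricSpace X] [MeasurableSpace X]
    (μ : Measure X) (x₀ : X) (p : ℝ → X → ℝ)
    (Q C_Q C C₁ R : ℝ) (hCQ : 0 < C_Q) (hC : 0 < C)
    (hC₁ : 0 < C₁) (hR : 0 < R)
    (hball : ∀ (x : X) (r : ℝ), 0 < r → 0 < (μ (ball x r)).toReal)
    (hdoub : ∀ (x : X) (r s : ℝ), 0 < r → r < s →
      (μ (ball x s)).toReal ≤ C_Q * (s / r) ^ Q * (μ (ball x r)).toReal)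
    (hp_nonneg : ∀ s y, 0 ≤ p s y)
    (hupper : ∀ s, 0 < s → ∀ y,
      p s y ≤ C * ((μ (ball x₀ (Real.sqrt s))).toReal)⁻¹ *
        Real.exp (-(dist x₀ y) ^ 2 / (C₁ * s))) :
    ∃ C' c : ℝ, 0 < C' ∧ 0 < c ∧ ∀ t : ℝ, 0 < t → t ≤ R ^ 2 →
      (C / R ^ 2) * ∫ s in Set.Ioo (0 : ℝ) t,
          ∫ y in ball x₀ (3 * R) \ ball x₀ (R / 2), (p s y) ^ 2 ∂μ
        ≤ C' * ((μ (ball x₀ R)).toReal)⁻¹ * Real.exp (-R ^ 2 / (c * t)) := by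
  set K : ℝ := ⌈Q⌉₊ ! * (4 * C₁) ^ ⌈Q⌉₊
  refine ⟨C ^ 3 * C_Q ^ 2 * 3 ^ Q * K, 4 * C₁, by positivity, by positivity, fun t ht htR => ?_⟩
  set D := C ^ 2 * C_Q ^ 2 * 3 ^ Q * K / μ.real (ball x₀ R) * exp (-R ^ 2 / (4 * C₁ * t)) with hD
  have hinner : ∀ s ∈ Ioo 0 t, ‖∫ y in ball x₀ (3 * R) \ ball x₀ (R / 2), p s y ^ 2 ∂μ‖ ≤ D :=
    fun s ⟨hs, hst⟩ ↦ norm_setIntegral_sq_annulus_le_exp hupper (hp_nonneg s) hdoub (hball x₀)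
      hC.le hC₁ hR hs hst htR
  have houter : ∫ s in Ioo 0 t, ∫ y in ball x₀ (3 * R) \ ball x₀ (R / 2), p s y ^ 2 ∂μ ≤ D * t :=
    (le_abs_self _).trans <|
      (norm_setIntegral_le_of_norm_le_const measure_Ioo_lt_top hinner).trans_eq
        (by rw [Real.volume_real_Ioo_of_le ht.le, sub_zero])
  calc (C / R ^ 2) * ∫ s in Ioo 0 t, ∫ y in ball x₀ (3 * R) \ ball x₀ (R / 2), p s y ^ 2 ∂μ
      ≤ C / R ^ 2 * (D * R ^ 2) := by gcongr; exact houter.trans (by gcongr)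
    _ = C ^ 3 * C_Q ^ 2 * 3 ^ Q * K * (μ (ball x₀ R)).toReal⁻¹ * exp (-R ^ 2 / (4 * C₁ * t)) := by
        rw [hD, measureReal_def]; field_simp

/-- Off-diagonal kernel mass estimate (first half of Lemma 2.2): under a Gaussian upper
bound, sub-probability normalization and Q-doubling, for `0 < t ≤ R²`,
`(C/R²)∫₀^t ∫_{B(x₀,3R)∖B(x₀,R/2)} p(s,x₀,y)² dμ ds ≤ C' μ(B(x₀,R))⁻¹ e^{−R²/(ct)}`. -/
theorem stmt_13 {X : Type*} [MetricSpace X] [MeasurableSpace X]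
    (μ : Measure X) (x₀ : X) (p : ℝ → X → ℝ)
    (Q C_Q C C₁ R : ℝ) (hQ : 1 < Q) (hCQ : 0 < C_Q) (hC : 0 < C)
    (hC₁ : 0 < C₁) (hR : 0 < R)
    (hball : ∀ (x : X) (r : ℝ), 0 < r → 0 < (μ (ball x r)).toReal)
    (hdoub : ∀ (x : X) (r s : ℝ), 0 < r → r < s →
      (μ (ball x s)).toReal ≤ C_Q * (s / r) ^ Q * (μ (ball x r)).toReal)
    (hp_nonneg : ∀ s y, 0 ≤ p s y) (hp_meas : ∀ s, Measurable (p s))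
    (hupper : ∀ s, 0 < s → ∀ y,
      p s y ≤ C * ((μ (ball x₀ (Real.sqrt s))).toReal)⁻¹ *
        Real.exp (-(dist x₀ y) ^ 2 / (C₁ * s)))
    (hsub : ∀ s, 0 < s → ∫ y, p s y ∂μ ≤ 1) :
    ∃ C' c : ℝ, 0 < C' ∧ 0 < c ∧ ∀ t : ℝ, 0 < t → t ≤ R ^ 2 →
      (C / R ^ 2) * ∫ s in Set.Ioo (0 : ℝ) t,
          ∫ y in ball x₀ (3 * R) \ ball x₀ (R / 2), (p s y) ^ 2 ∂μ
        ≤ C' * ((μ (ball x₀ R)).toReal)⁻¹ * Real.exp (-R ^ 2 / (c * t)) :=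
  stmt_13_general μ x₀ p Q C_Q C C₁ R hCQ hC hC₁ hR hball hdoub hp_nonneg hupper
end

section
/- A weighted example is harmonic but not Lipschitz: on Ω = (−1,1)² ⊂ ℝ² with dμ = √|x| dx dy, the function u(x,y) = sgn(x)√|x| satisfies ∫_Ω ∇u · ∇φ dμ = 0 for all smooth φ compactly supported in Ω (i.e. u is weighted-harmonic: div(w∇u) = 0 with w(x,y) = √|x|), yet u is not Lipschitz continuous in any neighborhood of the segment {x = 0}. -/
open MeasureTheory Metric

/-- The domain `Ω = (−1,1)² ⊂ ℝ²`. -/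
def stmt15Omega : Set (ℝ × ℝ) := Set.Ioo (-1 : ℝ) 1 ×ˢ Set.Ioo (-1 : ℝ) 1

/-- The weight `w(x,y) = √|x|`. -/
noncomputable def stmt15w (p : ℝ × ℝ) : ℝ := Real.sqrt |p.1|

/-- The function `u(x,y) = sgn(x)√|x|`. -/
noncomputable def stmt15u (p : ℝ × ℝ) : ℝ := Real.sign p.1 * Real.sqrt |p.1|

/-- The (a.e. defined) gradient of `u`: `∇u = (1/(2√|x|), 0)` for `x ≠ 0`. -/
noncomputable def stmt15Du (p : ℝ × ℝ) : ℝ × ℝ := (1 / (2 * Real.sqrt |p.1|), 0)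

/-- Integral of the derivative of a compactly supported `C¹` function vanishes. -/
lemma stmt15_integral_deriv_zero {g : ℝ → ℝ} (hg : ContDiff ℝ 1 g)
    (h2 : HasCompactSupport g) : ∫ x, deriv g x = 0 := by
  have hint : Integrable (deriv g) :=
    (hg.continuous_deriv le_rfl).integrable_of_hasCompactSupport h2.deriv
  rw [← intervalIntegral.integral_Iic_add_Ioi (b := (0 : ℝ)) hint.integrableOn hint.integrableOn,
    h2.integral_Iic_deriv_eq hg 0, h2.integral_Ioi_deriv_eq hg 0]
  ring

/-- On `Ω = (−1,1)²` with `dμ = √|x| dxdy`, the function `u(x,y) = sgn(x)√|x|` is weakly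
weighted-harmonic (`∫_Ω w ∇u·∇φ = 0` for all smooth `φ` compactly supported in `Ω`), yet
`u` is not Lipschitz on any neighborhood of the origin (a point of the segment `{x=0}`). -/
theorem stmt_15 :
    (∀ φ : ℝ × ℝ → ℝ, ContDiff ℝ (⊤ : ℕ∞) φ → HasCompactSupport φ → tsupport φ ⊆ stmt15Omega →
      ∫ p in stmt15Omega,
          stmt15w p * ((stmt15Du p).1 * fderiv ℝ φ p (1, 0)
            + (stmt15Du p).2 * fderiv ℝ φ p (0, 1)) = 0) ∧
    (∀ V ∈ nhds ((0, 0) : ℝ × ℝ), ∀ K : NNReal, ¬ LipschitzOnWith K stmt15u V) := by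
  constructor
  · intro φ hφ hc hs
    set f : ℝ × ℝ → ℝ := fun p => fderiv ℝ φ p (1, 0) with hf
    have hfc : Continuous f := by
      exact (hφ.continuous_fderiv (by simp)).clm_apply continuous_const
    have hfsupp : HasCompactSupport f := hc.fderiv_apply ℝ ((1:ℝ), (0:ℝ))
    have hfi : Integrable f := hfc.integrable_of_hasCompactSupport hfsupp
    -- the set {x = 0} is null
    have hnull : (volume : Measure (ℝ × ℝ)) {p | p.1 = 0} = 0 := by
      have he : {p : ℝ × ℝ | p.1 = 0} = ({0} : Set ℝ) ×ˢ (Set.univ : Set ℝ) := by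
        ext ⟨a, b⟩; simp [eq_comm]
      rw [he, Measure.volume_eq_prod, Measure.prod_prod, Real.volume_singleton, zero_mul]
    have hae : ∀ᵐ p ∂(volume.restrict stmt15Omega),
        stmt15w p * ((stmt15Du p).1 * fderiv ℝ φ p (1, 0)
          + (stmt15Du p).2 * fderiv ℝ φ p (0, 1)) = (1/2 : ℝ) * f p := by
      refine ae_restrict_of_ae ?_
      have h0 : ∀ᵐ p : ℝ × ℝ, p.1 ≠ 0 := by
        rw [ae_iff]
        simpa using hnull
      filter_upwards [h0] with p hp
      have hsq : Real.sqrt |p.1| ≠ 0 := ne_of_gt (Real.sqrt_pos.mpr (abs_pos.mpr hp))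
      simp only [stmt15w, stmt15Du, hf]
      field_simp
      ring
    rw [integral_congr_ae hae, integral_const_mul]
    have hset : ∫ p in stmt15Omega, f p = ∫ p, f p := by
      refine setIntegral_eq_integral_of_forall_compl_eq_zero fun p hp => ?_
      have hpn : p ∉ tsupport φ := fun h => hp (hs h)
      have : p ∉ Function.support (fderiv ℝ φ) :=
        fun h => hpn (support_fderiv_subset ℝ h)
      have hz : fderiv ℝ φ p = 0 := Function.notMem_support.mp this
      simp [hf, hz]
    rw [hset]
    have hfi' : Integrable f ((volume : Measure ℝ).prod (volume : Measure ℝ)) := by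
      rwa [← Measure.volume_eq_prod]
    have hinner : ∀ y : ℝ, ∫ x : ℝ, f (x, y) = 0 := by
      intro y
      set g : ℝ → ℝ := fun x => φ (x, y) with hg
      have hgd : ContDiff ℝ 1 g :=
        (hφ.comp (contDiff_id.prodMk contDiff_const)).of_le (by simp)
      have hemb : Topology.IsClosedEmbedding (fun x : ℝ => (x, y)) := by
        have : Isometry (fun x : ℝ => (x, y)) := by
          intro a b
          simp [Prod.edist_eq]
        exact this.isClosedEmbedding
      have hgc : HasCompactSupport g := hc.comp_isClosedEmbedding hemb
      have hd : ∀ x : ℝ, HasDerivAt g (f (x, y)) x := by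
        intro x
        have h1 : HasFDerivAt φ (fderiv ℝ φ (x, y)) (x, y) :=
          (hφ.differentiable (by simp) (x, y)).hasFDerivAt
        have h2 : HasDerivAt (fun t : ℝ => (t, y)) ((1 : ℝ), (0 : ℝ)) x :=
          (hasDerivAt_id x).prodMk (hasDerivAt_const x y)
        exact h1.comp_hasDerivAt x h2
      calc ∫ x : ℝ, f (x, y) = ∫ x : ℝ, deriv g x := by
            refine integral_congr_ae (Filter.Eventually.of_forall fun x => ?_)
            exact ((hd x).deriv).symm
        _ = 0 := stmt15_integral_deriv_zero hgd hgc
    have : ∫ p, f p = 0 := by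
      rw [Measure.volume_eq_prod, integral_prod_symm f hfi']
      simp [hinner]
    rw [this]; ring
  · intro V hV K hL
    obtain ⟨ε, hε, hball⟩ := Metric.mem_nhds_iff.mp hV
    set x : ℝ := min ε (((K : ℝ) + 1)⁻¹ ^ 2) / 2 with hxdef
    have hK1 : (0 : ℝ) < (K : ℝ) + 1 := by positivity
    have hx : 0 < x := by
      have : (0 : ℝ) < min ε (((K : ℝ) + 1)⁻¹ ^ 2) := lt_min hε (by positivity)
      linarith
    have hxε : x < ε := by
      have h1 : min ε (((K : ℝ) + 1)⁻¹ ^ 2) ≤ ε := min_le_left _ _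
      linarith
    have hxs : Real.sqrt x < ((K : ℝ) + 1)⁻¹ := by
      have h1 : x < (((K : ℝ) + 1)⁻¹) ^ 2 := by
        have h2 : min ε (((K : ℝ) + 1)⁻¹ ^ 2) ≤ (((K : ℝ) + 1)⁻¹) ^ 2 := min_le_right _ _
        have h3 : (0 : ℝ) < (((K : ℝ) + 1)⁻¹) ^ 2 := by positivity
        rw [hxdef]; linarith
      calc Real.sqrt x < Real.sqrt ((((K : ℝ) + 1)⁻¹) ^ 2) :=
            Real.sqrt_lt_sqrt hx.le h1
        _ = ((K : ℝ) + 1)⁻¹ := Real.sqrt_sq (by positivity)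
    set s : ℝ := Real.sqrt x with hsdef
    have hs0 : 0 < s := Real.sqrt_pos.mpr hx
    -- membership
    have hdp : dist ((x, 0) : ℝ × ℝ) ((0, 0) : ℝ × ℝ) = x := by
      rw [Prod.dist_eq]; simp [Real.dist_eq, abs_of_pos hx, hx.le]
    have hmem : ((x, 0) : ℝ × ℝ) ∈ V := by
      apply hball
      rw [Metric.mem_ball, hdp]
      exact hxε
    have h0mem : ((0, 0) : ℝ × ℝ) ∈ V := hball (Metric.mem_ball_self hε)
    have hdist := hL.dist_le_mul (x, 0) hmem (0, 0) h0mem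
    have hu1 : stmt15u (x, 0) = s := by
      simp [stmt15u, Real.sign_of_pos hx, abs_of_pos hx, hsdef]
    have hu0 : stmt15u (0, 0) = 0 := by
      simp [stmt15u]
    rw [hu1, hu0, hdp, Real.dist_eq, sub_zero, abs_of_nonneg hs0.le] at hdist
    -- hdist : s ≤ K * x
    have hxx : x = s * s := (Real.mul_self_sqrt hx.le).symm
    have h1 : 1 ≤ (K : ℝ) * s := by
      rw [hxx] at hdist
      nlinarith
    have h2 : (K : ℝ) * s < 1 := by
      have hKnn : (0 : ℝ) ≤ (K : ℝ) := K.coe_nonneg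
      have : (K : ℝ) * s ≤ (K : ℝ) * ((K : ℝ) + 1)⁻¹ :=
        mul_le_mul_of_nonneg_left hxs.le hKnn
      have hlt : (K : ℝ) * ((K : ℝ) + 1)⁻¹ < 1 := by
        rw [← div_eq_mul_inv, div_lt_one hK1]
        linarith
      linarith
    linarith
end
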